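/- Adjoint-based gradient formula: with Ĵ(u) = ½ ‖G u − y_d‖² + (λ/2) ‖u‖² where G u = B⁻¹(F u + C) for a Hilbert-space isomorphism B, the Fréchet derivative of Ĵ at u is Ĵ′(u) = λ u + F* p, where p solves the adjoint equation B* p = ι(G u − y_d) (ι the canonical embedding of the observation), i.e., for all v ∈ U, Ĵ′(u)(v) = λ ⟨u, v⟩ + ⟨F* p, v⟩. -/

import Mathlib

open RealInnerProductSpace

/-! By the chain rule, `Ĵ'(u) v = ⟪G u - y_d, B⁻¹ (F v)⟫ + λ ⟪u, v⟫`. The adjoint equation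
`B* p = G u - y_d` turns the first term into `⟪B* p, B⁻¹ (F v)⟫ = ⟪p, F v⟫ = ⟪F* p, v⟫`. -/

theorem HasFDerivAt.half_norm_sub_sq_add_half_norm_sq {U Y : Type*}
    [NormedAddCommGroup U] [InnerProductSpace ℝ U]
    [NormedAddCommGroup Y] [InnerProductSpace ℝ Y]
    {G : U → Y} {G' : U →L[ℝ] Y} {u : U} (hG : HasFDerivAt G G' u) (y_d : Y) (lam : ℝ) :
    HasFDerivAt (fun w => (1 / 2) * ‖G w - y_d‖ ^ 2 + (lam / 2) * ‖w‖ ^ 2)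
      ((innerSL ℝ (G u - y_d)).comp G' + lam • innerSL ℝ u) u := by
  refine (((hG.sub_const y_d).norm_sq.const_mul (1 / 2)).add
    ((hasFDerivAt_id u).norm_sq.const_mul (lam / 2))).congr_fderiv ?_
  ext v
  simp only [add_apply, smul_apply, ContinuousLinearMap.comp_apply, innerSL_apply_apply,
    ContinuousLinearMap.id_apply, id, smul_eq_mul, nsmul_eq_mul]
  ring

theorem ContinuousLinearEquiv.inner_adjoint_apply_symm_apply {Y Z : Type*}
    [NormedAddCommGroup Y] [InnerProductSpace ℝ Y] [CompleteSpace Y]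
    [NormedAddCommGroup Z] [InnerProductSpace ℝ Z] [CompleteSpace Z]
    (B : Y ≃L[ℝ] Z) (p z : Z) :
    ⟪ContinuousLinearMap.adjoint (B : Y →L[ℝ] Z) p, B.symm z⟫ = ⟪p, z⟫ := by
  rw [ContinuousLinearMap.adjoint_inner_left, ContinuousLinearEquiv.coe_coe, B.apply_symm_apply]

theorem adjoint_gradient_formula_general {U Y Z : Type*}
    [NormedAddCommGroup U] [InnerProductSpace ℝ U] [CompleteSpace U]
    [NormedAddCommGroup Y] [InnerProductSpace ℝ Y] [CompleteSpace Y]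
    [NormedAddCommGroup Z] [InnerProductSpace ℝ Z] [CompleteSpace Z]
    (B : Y ≃L[ℝ] Z) (F : U →L[ℝ] Z) (C : Z) (y_d : Y) (lam : ℝ)
    (G : U → Y) (hG : ∀ u, G u = B.symm (F u + C))
    (J : U → ℝ) (hJ : ∀ u, J u = (1 / 2) * ‖G u - y_d‖ ^ 2 + (lam / 2) * ‖u‖ ^ 2)
    (u : U) (p : Z)
    (hp : ContinuousLinearMap.adjoint (B : Y →L[ℝ] Z) p = G u - y_d) :
    ∃ D : U →L[ℝ] ℝ, HasFDerivAt J D u ∧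
      ∀ v : U, D v = lam * ⟪u, v⟫ + ⟪ContinuousLinearMap.adjoint F p, v⟫ := by
  have hG' : HasFDerivAt G ((B.symm : Z →L[ℝ] Y).comp F) u := by
    rw [funext hG]
    exact (B.symm : Z →L[ℝ] Y).hasFDerivAt.comp u (F.hasFDerivAt.add_const C)
  refine ⟨_, funext hJ ▸ hG'.half_norm_sub_sq_add_half_norm_sq y_d lam, fun v => ?_⟩
  have hadjoint : ⟪G u - y_d, B.symm (F v)⟫ = ⟪ContinuousLinearMap.adjoint F p, v⟫ := by
    rw [← hp, B.inner_adjoint_apply_symm_apply, ContinuousLinearMap.adjoint_inner_left]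
  simp only [add_apply, smul_apply, ContinuousLinearMap.comp_apply, innerSL_apply_apply,
    ContinuousLinearEquiv.coe_coe, smul_eq_mul, hadjoint, add_comm]

theorem adjoint_gradient_formula {U Y Z : Type*}
    [NormedAddCommGroup U] [InnerProductSpace ℝ U] [CompleteSpace U]
    [NormedAddCommGroup Y] [InnerProductSpace ℝ Y] [CompleteSpace Y]
    [NormedAddCommGroup Z] [InnerProductSpace ℝ Z] [CompleteSpace Z]
    (B : Y ≃L[ℝ] Z) (F : U →L[ℝ] Z) (C : Z) (y_d : Y) (lam : ℝ) (hlam : 0 < lam)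
    (G : U → Y) (hG : ∀ u, G u = B.symm (F u + C))
    (J : U → ℝ) (hJ : ∀ u, J u = (1 / 2) * ‖G u - y_d‖ ^ 2 + (lam / 2) * ‖u‖ ^ 2)
    (u : U) (p : Z)
    (hp : ContinuousLinearMap.adjoint (B : Y →L[ℝ] Z) p = G u - y_d) :
    ∃ D : U →L[ℝ] ℝ, HasFDerivAt J D u ∧
      ∀ v : U, D v = lam * ⟪u, v⟫ + ⟪ContinuousLinearMap.adjoint F p, v⟫ :=
  adjoint_gradient_formula_general B F C y_d lam G hG J hJ u p hp
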